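/- Let T be a triangulated category with a mod-n reduction, i.e. an exact functor ρ_* : T → T/n to a triangulated category T/n with exact right adjoint ρ^*, such that for every X there is a distinguished triangle X --(n·id)--> X --η_X--> ρ^*(ρ_* X) → X[1] in which η_X is the adjunction unit. Then for every object Z of T/n and every k, the object ρ^*(Z) has n-order ≥ k in T; consequently every cone X/n of n·id_X has infinite n-order. -/

import Mathlib

open CategoryTheory CategoryTheory.Limits CategoryTheory.Pretriangulated

universe v₁ v₂ u₁ u₂

/-- The inductive "n-order ≥ k" predicate on objects of a triangulated category. -/
def nOrderGE (C : Type u₁) [Category.{v₁} C] [HasZeroObject C] [Preadditive C] [HasShift C ℤ]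
    [∀ i : ℤ, (shiftFunctor C i).Additive] [Pretriangulated C]
    (n : ℕ) : ℕ → C → Prop
  | 0, _ => True
  | k + 1, X => ∀ ⦃K Kn : C⦄ (π : K ⟶ Kn) (δ : Kn ⟶ K⟦(1 : ℤ)⟧),
      (Triangle.mk (n • 𝟙 K) π δ ∈ distTriang C) →
      ∀ f : K ⟶ X, ∃ fb : Kn ⟶ X, π ≫ fb = f ∧
        ∃ (Cf : C) (g : X ⟶ Cf) (h : Cf ⟶ Kn⟦(1 : ℤ)⟧),
          (Triangle.mk fb g h ∈ distTriang C) ∧ nOrderGE C n k Cf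

/-!
Let `ρ_* ⊣ ρ^*` be a mod-`n` reduction. Any cone `K/n` of `n • 𝟙 K` is identified with
`ρ^* ρ_* K` through the unit, so a map `f : K ⟶ ρ^* Z` extends over `K ⟶ K/n` by its adjoint
transpose `ρ_* K ⟶ Z`, and its cone is `ρ^*` of the cone of that transpose, which is again in
the image of `ρ^*`. Induction on `k` shows that objects `ρ^* Z` have every finite `n`-order, and
`X/n ≅ ρ^* ρ_* X` is one of them.
-/

section Pretriangulated

variable {C : Type u₁} [Category.{v₁} C] [HasZeroObject C] [Preadditive C] [HasShift C ℤ]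
  [∀ i : ℤ, (shiftFunctor C i).Additive] [Pretriangulated C]

lemma nOrderGE_of_iso {n k : ℕ} {A B : C} (e : A ≅ B) (hA : nOrderGE C n k A) :
    nOrderGE C n k B := by
  cases k with
  | zero => trivial
  | succ k =>
    intro K Kn π δ hT f
    obtain ⟨fb, hfb, Cf, g, h, hdist, hord⟩ := hA π δ hT (f ≫ e.inv)
    refine ⟨fb ≫ e.hom, by simp [reassoc_of% hfb], Cf, e.inv ≫ g, h, ?_, hord⟩
    -- Unfolding `Triangle.mk` exposes the objects hidden in the implicit arguments of `≫`.
    refine isomorphic_distinguished _ hdist _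
      (Triangle.isoMk _ _ (Iso.refl _) e.symm (Iso.refl _) ?_ ?_ ?_) <;> simp [Triangle.mk]

lemma triangle_mk_iso_comp_distinguished {A' A B X : C} (e : A' ≅ A) (a : A ⟶ B) (b : B ⟶ X)
    (c : X ⟶ A⟦(1 : ℤ)⟧) (hT : Triangle.mk a b c ∈ distTriang C) :
    Triangle.mk (e.hom ≫ a) b (c ≫ e.inv⟦(1 : ℤ)⟧') ∈ distTriang C := by
  refine isomorphic_distinguished _ hT _
    (Triangle.isoMk _ _ e (Iso.refl _) (Iso.refl _) ?_ ?_ ?_) <;> simp [Triangle.mk]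

end Pretriangulated

section ModReduction

variable {C : Type u₁} [Category.{v₁} C] [HasZeroObject C] [Preadditive C] [HasShift C ℤ]
  [∀ i : ℤ, (shiftFunctor C i).Additive] [Pretriangulated C]
  {D : Type u₂} [Category.{v₂} D] {ρs : C ⥤ D} {ρu : D ⥤ C}

def IsModReduction (n : ℕ) (adj : ρs ⊣ ρu) : Prop :=
  ∀ X : C, ∃ δ : ρu.obj (ρs.obj X) ⟶ X⟦(1 : ℤ)⟧,
    Triangle.mk (n • 𝟙 X) (adj.unit.app X) δ ∈ distTriang C

variable {n : ℕ} {adj : ρs ⊣ ρu}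

lemma IsModReduction.exists_iso_comp_eq_unit (hred : IsModReduction n adj)
    {K Kn : C} (π : K ⟶ Kn) (δ : Kn ⟶ K⟦(1 : ℤ)⟧)
    (hT : Triangle.mk (n • 𝟙 K) π δ ∈ distTriang C) :
    ∃ e : Kn ≅ ρu.obj (ρs.obj K), π ≫ e.hom = adj.unit.app K := by
  obtain ⟨δ', hT'⟩ := hred K
  obtain ⟨e, -, he₂⟩ := exists_iso_of_arrow_iso _ _ hT hT' (Iso.refl _)
  refine ⟨Triangle.π₃.mapIso e, e.hom.comm₂.trans ?_⟩
  rw [he₂]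
  exact Category.id_comp _

lemma IsModReduction.exists_extension_with_cone_obj [HasZeroObject D] [Preadditive D]
    [HasShift D ℤ] [∀ i : ℤ, (shiftFunctor D i).Additive] [Pretriangulated D]
    [ρu.CommShift ℤ] [ρu.IsTriangulated] (hred : IsModReduction n adj)
    {K Kn : C} (π : K ⟶ Kn) (δ : Kn ⟶ K⟦(1 : ℤ)⟧)
    (hT : Triangle.mk (n • 𝟙 K) π δ ∈ distTriang C) {Z : D} (f : K ⟶ ρu.obj Z) :
    ∃ fb : Kn ⟶ ρu.obj Z, π ≫ fb = f ∧ ∃ (W : D) (g : ρu.obj Z ⟶ ρu.obj W)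
      (h : ρu.obj W ⟶ Kn⟦(1 : ℤ)⟧), Triangle.mk fb g h ∈ distTriang C := by
  obtain ⟨e, he⟩ := hred.exists_iso_comp_eq_unit π δ hT
  obtain ⟨W, g, h, hW⟩ := distinguished_cocone_triangle ((adj.homEquiv K Z).symm f)
  refine ⟨e.hom ≫ ρu.map ((adj.homEquiv K Z).symm f), ?_, W, ρu.map g, _,
    triangle_mk_iso_comp_distinguished e _ _ _ (ρu.map_distinguished _ hW)⟩
  rw [reassoc_of% he, ← Adjunction.homEquiv_unit, Equiv.apply_symm_apply]

lemma IsModReduction.nOrderGE_obj [HasZeroObject D] [Preadditive D]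
    [HasShift D ℤ] [∀ i : ℤ, (shiftFunctor D i).Additive] [Pretriangulated D]
    [ρu.CommShift ℤ] [ρu.IsTriangulated] (hred : IsModReduction n adj) (Z : D) (k : ℕ) :
    nOrderGE C n k (ρu.obj Z) := by
  induction k generalizing Z with
  | zero => trivial
  | succ k ih =>
    intro K Kn π δ hT f
    obtain ⟨fb, hfb, W, g, h, hdist⟩ := hred.exists_extension_with_cone_obj π δ hT f
    exact ⟨fb, hfb, _, g, h, hdist, ih W⟩

end ModReduction

/-- Suppose the triangulated category `C` has a mod-`n` reduction:
an exact functor `ρs : C ⥤ D` to a triangulated category `D`, with exact right adjoint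
`ρu`, such that for every `X` there is a distinguished triangle
`X --(n·id)--> X --η_X--> ρu(ρs X) --> X⟦1⟧` whose second map is the adjunction unit.
Then every object `ρu Z` has `n`-order `≥ k` in `C` for all `k`; consequently every
cone `X/n` of `n • 𝟙 X` has infinite `n`-order. -/
theorem nOrderGE_of_mod_n_reduction
    {C : Type u₁} [Category.{v₁} C] [HasZeroObject C] [Preadditive C] [HasShift C ℤ]
    [∀ i : ℤ, (shiftFunctor C i).Additive] [Pretriangulated C]
    {D : Type u₂} [Category.{v₂} D] [HasZeroObject D] [Preadditive D] [HasShift D ℤ]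
    [∀ i : ℤ, (shiftFunctor D i).Additive] [Pretriangulated D]
    (n : ℕ) (ρs : C ⥤ D) (ρu : D ⥤ C)
    [ρs.CommShift ℤ] [ρs.IsTriangulated] [ρu.CommShift ℤ] [ρu.IsTriangulated]
    (adj : ρs ⊣ ρu)
    (hred : ∀ X : C, ∃ δ : ρu.obj (ρs.obj X) ⟶ X⟦(1 : ℤ)⟧,
      Triangle.mk (n • 𝟙 X) (adj.unit.app X) δ ∈ distTriang C) :
    (∀ (Z : D) (k : ℕ), nOrderGE C n k (ρu.obj Z)) ∧
    (∀ (X Xn : C) (π : X ⟶ Xn) (δ : Xn ⟶ X⟦(1 : ℤ)⟧),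
      (Triangle.mk (n • 𝟙 X) π δ ∈ distTriang C) → ∀ k : ℕ, nOrderGE C n k Xn) := by
  have hred : IsModReduction n adj := hred
  refine ⟨hred.nOrderGE_obj, fun X Xn π δ hT k => ?_⟩
  obtain ⟨e, -⟩ := hred.exists_iso_comp_eq_unit π δ hT
  exact nOrderGE_of_iso e.symm (hred.nOrderGE_obj _ k)
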